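/- arXiv:0910.3675 — 8 statements merged into one kernel-verified Lean document; each statement's English description precedes it below -/
import Mathlib

section
/- Let P and Q be orthogonal projections on a Hilbert space H such that Q - P has finite rank. Then the range R = (Q - P)(H) is an invariant subspace for both P and Q. -/
/-!
For idempotents `p`, `q` in any ring, `q - p` intertwines `q` with `1 - p` and `p` with `1 - q`:
`q (q - p) = (q - p) (1 - p)` and `p (q - p) = (q - p) (1 - q)`. Hence the range of `q - p` is
invariant under both `p` and `q`.
-/

/-- A continuous linear operator has finite rank if its range is finite dimensional. -/
def FiniteRankOp {H : Type*} [NormedAddCommGroup H] [InnerProductSpace ℂ H]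
    (T : H →L[ℂ] H) : Prop :=
  FiniteDimensional ℂ (LinearMap.range (T : H →ₗ[ℂ] H))

section Ring

variable {R : Type*} [Ring R] {p q : R}

theorem IsIdempotentElem.mul_sub_eq_sub_mul_one_sub_right (hp : IsIdempotentElem p)
    (hq : IsIdempotentElem q) : q * (q - p) = (q - p) * (1 - p) := by
  simp only [mul_sub, sub_mul, mul_one, hp.eq, hq.eq]
  abel

theorem IsIdempotentElem.mul_sub_eq_sub_mul_one_sub_left (hp : IsIdempotentElem p)
    (hq : IsIdempotentElem q) : p * (q - p) = (q - p) * (1 - q) := by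
  simp only [mul_sub, sub_mul, mul_one, hp.eq, hq.eq]
  abel

end Ring

theorem LinearMap.apply_mem_range_of_mul_eq_mul {R M : Type*} [Semiring R] [AddCommMonoid M]
    [Module R M] {f g T : Module.End R M} (h : f * T = T * g) {x : M} (hx : x ∈ range T) :
    f x ∈ range T := by
  obtain ⟨y, rfl⟩ := hx
  exact ⟨g y, by rw [← Module.End.mul_apply, ← h, Module.End.mul_apply]⟩

theorem range_diff_invariant_general
    {H : Type*} [NormedAddCommGroup H] [InnerProductSpace ℂ H]
    (P Q : H →L[ℂ] H)
    (hP_proj : P ∘L P = P)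
    (hQ_proj : Q ∘L Q = Q) :
    ∀ x ∈ LinearMap.range ((Q - P : H →L[ℂ] H) : H →ₗ[ℂ] H),
      P x ∈ LinearMap.range ((Q - P : H →L[ℂ] H) : H →ₗ[ℂ] H) ∧
      Q x ∈ LinearMap.range ((Q - P : H →L[ℂ] H) : H →ₗ[ℂ] H) := by
  intro x hx
  have hP : IsIdempotentElem (P : Module.End ℂ H) :=
    congrArg ContinuousLinearMap.toLinearMap hP_proj
  have hQ : IsIdempotentElem (Q : Module.End ℂ H) :=
    congrArg ContinuousLinearMap.toLinearMap hQ_proj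
  rw [ContinuousLinearMap.toLinearMap_sub] at hx ⊢
  exact ⟨LinearMap.apply_mem_range_of_mul_eq_mul (hP.mul_sub_eq_sub_mul_one_sub_left hQ) hx,
    LinearMap.apply_mem_range_of_mul_eq_mul (hP.mul_sub_eq_sub_mul_one_sub_right hQ) hx⟩

/-- If `P` and `Q` are orthogonal projections on a complex Hilbert space `H`
such that `Q - P` has finite rank, then the range `R = (Q - P)(H)` is an invariant
subspace for both `P` and `Q`. -/
theorem range_diff_invariant
    {H : Type*} [NormedAddCommGroup H] [InnerProductSpace ℂ H] [CompleteSpace H]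
    (P Q : H →L[ℂ] H)
    (hP_proj : P ∘L P = P) (hP_sa : IsSelfAdjoint P)
    (hQ_proj : Q ∘L Q = Q) (hQ_sa : IsSelfAdjoint Q)
    (hfin : FiniteRankOp (Q - P)) :
    ∀ x ∈ LinearMap.range ((Q - P : H →L[ℂ] H) : H →ₗ[ℂ] H),
      P x ∈ LinearMap.range ((Q - P : H →L[ℂ] H) : H →ₗ[ℂ] H) ∧
      Q x ∈ LinearMap.range ((Q - P : H →L[ℂ] H) : H →ₗ[ℂ] H) :=
  range_diff_invariant_general P Q hP_proj hQ_proj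
end

section
/- Let P and Q be orthogonal projections on a Hilbert space H such that Q - P has finite rank. Then the trace of Q - P is an integer. -/
/-- The trace of a finite-rank operator, computed as the trace of its compression to
its (finite-dimensional) range.  For a finite-rank operator on a Hilbert space this
agrees with the usual trace `∑ ⟨eᵢ, T eᵢ⟩`. -/
noncomputable def trFR {H : Type*} [NormedAddCommGroup H] [InnerProductSpace ℂ H]
    (T : H →L[ℂ] H) : ℂ :=
  LinearMap.trace ℂ (LinearMap.range (T : H →ₗ[ℂ] H))
    ((T : H →ₗ[ℂ] H).restrict fun x _ => LinearMap.mem_range_self _ x)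

/-! Since `P (P - Q) = (P - Q) (1 - Q)` and symmetrically for `Q`, the range of `Q - P` is invariant
under both projections. The compression of `Q - P` to this finite-dimensional range is therefore
the difference of the compressions of `Q` and `P`, which are idempotent, and the trace of an
idempotent is the dimension of its range. -/

open Module LinearMap

theorem IsIdempotentElem.mul_sub_eq_sub_mul_one_sub {R : Type*} [Ring R] {p q : R}
    (hp : IsIdempotentElem p) (hq : IsIdempotentElem q) :
    p * (p - q) = (p - q) * (1 - q) := by
  rw [mul_sub, sub_mul, mul_sub, mul_sub, hp.eq, hq.eq, mul_one, mul_one]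
  abel

section

variable {R M : Type*} [Ring R] [AddCommGroup M] [Module R M]

theorem Module.End.mapsTo_range_of_mul_eq {f g h : End R M} (hfg : f * g = g * h) :
    Set.MapsTo f (range g) (range g) := by
  rintro _ ⟨x, rfl⟩
  exact ⟨h x, by rw [← End.mul_apply, ← hfg, End.mul_apply]⟩

variable {p q : End R M}

theorem IsIdempotentElem.mapsTo_range_sub_left (hp : IsIdempotentElem p)
    (hq : IsIdempotentElem q) : Set.MapsTo p (range (p - q)) (range (p - q)) :=
  End.mapsTo_range_of_mul_eq (hp.mul_sub_eq_sub_mul_one_sub hq)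

theorem IsIdempotentElem.mapsTo_range_sub_right (hp : IsIdempotentElem p)
    (hq : IsIdempotentElem q) : Set.MapsTo q (range (p - q)) (range (p - q)) := by
  rw [← range_neg, neg_sub]
  exact hq.mapsTo_range_sub_left hp

end

section

variable {K V : Type*} [Field K] [AddCommGroup V] [Module K V]

theorem IsIdempotentElem.trace_restrict {p : End K V} (hp : IsIdempotentElem p)
    {W : Submodule K V} [FiniteDimensional K W] (hW : Set.MapsTo p W W) :
    trace K W (p.restrict hW) = finrank K (range (p.restrict hW)) := by
  have hpW : IsIdempotentElem (p.restrict hW) := by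
    ext x
    exact congrArg (· x) hp.eq
  exact hpW.isProj_range.trace

theorem IsIdempotentElem.exists_trace_restrict_range_sub_eq_intCast {p q : End K V} (hp : IsIdempotentElem p)
    (hq : IsIdempotentElem q) [FiniteDimensional K (range (p - q))] :
    ∃ n : ℤ, trace K (range (p - q)) ((p - q).restrict fun x _ => mem_range_self _ x) = n := by
  have hpW := hp.mapsTo_range_sub_left hq
  have hqW := hp.mapsTo_range_sub_right hq
  refine ⟨finrank K (range (p.restrict hpW)) - finrank K (range (q.restrict hqW)), ?_⟩
  rw [← restrict_sub hpW hqW, map_sub, hp.trace_restrict, hq.trace_restrict]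
  push_cast
  rfl

end

theorem trace_proj_diff_int_general
    {H : Type*} [NormedAddCommGroup H] [InnerProductSpace ℂ H]
    (P Q : H →L[ℂ] H)
    (hP_proj : P ∘L P = P)
    (hQ_proj : Q ∘L Q = Q)
    (hfin : FiniteRankOp (Q - P)) :
    ∃ n : ℤ, trFR (Q - P) = n := by
  have hP : IsIdempotentElem (P : End ℂ H) := congrArg ContinuousLinearMap.toLinearMap hP_proj
  have hQ : IsIdempotentElem (Q : End ℂ H) := congrArg ContinuousLinearMap.toLinearMap hQ_proj
  have : FiniteDimensional ℂ (range ((Q : End ℂ H) - (P : End ℂ H))) := hfin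
  exact IsIdempotentElem.exists_trace_restrict_range_sub_eq_intCast hQ hP

/-- If `P` and `Q` are orthogonal projections on a complex Hilbert space
such that `Q - P` has finite rank, then the trace of `Q - P` is an integer. -/
theorem trace_proj_diff_int
    {H : Type*} [NormedAddCommGroup H] [InnerProductSpace ℂ H] [CompleteSpace H]
    (P Q : H →L[ℂ] H)
    (hP_proj : P ∘L P = P) (hP_sa : IsSelfAdjoint P)
    (hQ_proj : Q ∘L Q = Q) (hQ_sa : IsSelfAdjoint Q)
    (hfin : FiniteRankOp (Q - P)) :
    ∃ n : ℤ, trFR (Q - P) = n :=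
  trace_proj_diff_int_general P Q hP_proj hQ_proj hfin
end

section
/- Let U be a unitary operator on a Hilbert space H and P an orthogonal projection such that the commutator [P, U] has finite rank. Then U*PU - P has finite rank and Tr(U*PU - P) is an integer. -/
namespace LinearMap

variable {K M : Type*} [Field K] [AddCommGroup M] [Module K M]

lemma trace_restrict_range_eq_trace_restrict (f : M →ₗ[K] M) {W : Submodule K M}
    [FiniteDimensional K W] (hW : range f ≤ W) :
    trace K (range f) (f.restrict fun x _ => mem_range_self f x) =
      trace K W (f.restrict fun x _ => hW (mem_range_self f x)) := by
  set g : W →ₗ[K] W := f.restrict fun x _ => hW (mem_range_self f x)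
  have hg : ∀ x, g x ∈ (range f).comap W.subtype := fun x => mem_range_self f x
  rw [← trace_restrict_eq_of_forall_mem _ g hg,
    ← trace_conj' _ (Submodule.comapSubtypeEquivOfLe hW)]
  congr 1

lemma _root_.IsIdempotentElem.restrict {p : M →ₗ[K] M} (hp : IsIdempotentElem p)
    {W : Submodule K M} (hW : Set.MapsTo p W W) : IsIdempotentElem (p.restrict hW) := by
  ext x
  exact congrArg (fun f : M →ₗ[K] M => f x) hp.eq

lemma trace_restrict_of_isIdempotentElem {p : M →ₗ[K] M} (hp : IsIdempotentElem p)
    {W : Submodule K M} [FiniteDimensional K W] (hW : Set.MapsTo p W W) :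
    trace K W (p.restrict hW) = Module.finrank K (range (p.restrict hW)) :=
  (IsIdempotentElem.isProj_range _ (hp.restrict hW)).trace

theorem exists_trace_restrict_range_sub_eq_intCast {p q : M →ₗ[K] M}
    (hp : IsIdempotentElem p) (hq : IsIdempotentElem q) [FiniteDimensional K (range (q - p))] :
    ∃ n : ℤ, trace K (range (q - p)) ((q - p).restrict fun x _ => mem_range_self _ x) = n := by
  set V := range (q - p)
  set W := V ⊔ V.map p
  have hVW : V ≤ W := le_sup_left
  have hpW : Set.MapsTo p W W := by
    intro x hx
    obtain ⟨v, hv, w, ⟨y, hy, rfl⟩, rfl⟩ := Submodule.mem_sup.mp hx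
    have hppy : p (p y) = p y := congrArg (fun f : M →ₗ[K] M => f y) hp.eq
    rw [map_add, hppy]
    exact Submodule.mem_sup_right
      (add_mem (Submodule.mem_map_of_mem hv) (Submodule.mem_map_of_mem hy))
  have hqW : Set.MapsTo q W W := by
    intro x hx
    have : q x = p x + (q - p) x := by simp
    rw [this]
    exact add_mem (hpW hx) (hVW (mem_range_self _ x))
  refine ⟨Module.finrank K (range (q.restrict hqW)) - Module.finrank K (range (p.restrict hpW)),
    ?_⟩
  rw [trace_restrict_range_eq_trace_restrict _ hVW, ← restrict_sub hqW hpW, map_sub,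
    trace_restrict_of_isIdempotentElem hq, trace_restrict_of_isIdempotentElem hp]
  norm_cast

end LinearMap

lemma FiniteRankOp.mul_left {H : Type*} [NormedAddCommGroup H] [InnerProductSpace ℂ H]
    (A : H →L[ℂ] H) {T : H →L[ℂ] H} (hT : FiniteRankOp T) : FiniteRankOp (A * T) := by
  have : FiniteDimensional ℂ (LinearMap.range (T : H →ₗ[ℂ] H)) := hT
  unfold FiniteRankOp
  rw [ContinuousLinearMap.toLinearMap_mul, Module.End.mul_eq_comp, LinearMap.range_comp]
  infer_instance

section Unitary

variable {R : Type*} {u : R}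

lemma isIdempotentElem_star_mul_mul [Monoid R] [StarMul R] (hu : u ∈ unitary R) {p : R}
    (hp : IsIdempotentElem p) : IsIdempotentElem (star u * p * u) :=
  calc star u * p * u * (star u * p * u) = star u * (p * (u * star u) * p) * u := by
        simp only [mul_assoc]
    _ = star u * p * u := by rw [Unitary.mul_star_self_of_mem hu, mul_one, hp.eq, mul_assoc]

lemma star_mul_mul_sub_eq_star_mul_commutator [Ring R] [StarMul R] (hu : u ∈ unitary R) (p : R) :
    star u * p * u - p = star u * (p * u - u * p) := by
  rw [mul_sub, ← mul_assoc, ← mul_assoc, Unitary.star_mul_self_of_mem hu, one_mul]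

end Unitary

theorem index_is_integer_general
    {H : Type*} [NormedAddCommGroup H] [InnerProductSpace ℂ H] [CompleteSpace H]
    (U P : H →L[ℂ] H) (hU : U ∈ unitary (H →L[ℂ] H))
    (hP_proj : P ∘L P = P)
    (hfin : FiniteRankOp (P * U - U * P)) :
    FiniteRankOp (star U * P * U - P) ∧ ∃ n : ℤ, trFR (star U * P * U - P) = n := by
  have hfinite : FiniteRankOp (star U * P * U - P) := by
    rw [star_mul_mul_sub_eq_star_mul_commutator hU]
    exact hfin.mul_left _
  refine ⟨hfinite, ?_⟩
  have : FiniteDimensional ℂ (LinearMap.range (star U * P * U - P : H →L[ℂ] H).toLinearMap) :=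
    hfinite
  have hP : IsIdempotentElem P := hP_proj
  exact LinearMap.exists_trace_restrict_range_sub_eq_intCast
    (congrArg ContinuousLinearMap.toLinearMap hP)
    (congrArg ContinuousLinearMap.toLinearMap (isIdempotentElem_star_mul_mul hU hP))

/-- If `U` is unitary, `P` an orthogonal projection, and the commutator
`[P, U] = P U - U P` has finite rank, then `U* P U - P` has finite rank and its trace
(the index of the quantum walk `U`) is an integer. -/
theorem index_is_integer
    {H : Type*} [NormedAddCommGroup H] [InnerProductSpace ℂ H] [CompleteSpace H]
    (U P : H →L[ℂ] H) (hU : U ∈ unitary (H →L[ℂ] H))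
    (hP_proj : P ∘L P = P) (hP_sa : IsSelfAdjoint P)
    (hfin : FiniteRankOp (P * U - U * P)) :
    FiniteRankOp (star U * P * U - P) ∧ ∃ n : ℤ, trFR (star U * P * U - P) = n :=
  index_is_integer_general U P hU hP_proj hfin
end

section
/- Let U₁, U₂ be unitary operators on a Hilbert space H and P an orthogonal projection such that both [P,U₁] and [P,U₂] have finite rank. Then ind(U₁U₂) = ind(U₁) + ind(U₂), where ind(U) = Tr(U*PU - P). -/
/-- The index of a quantum walk `U` relative to the half-line projection `P`:
`ind U = Tr(U* P U - P)`. -/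
noncomputable def ind {H : Type*} [NormedAddCommGroup H] [InnerProductSpace ℂ H]
    [CompleteSpace H] (P U : H →L[ℂ] H) : ℂ :=
  trFR (star U * P * U - P)

/-!
Writing `A(U) = U* P U - P`, the index is `Tr A(U)`. If `[P, U]` has finite rank then so does
`A(U) = U* [P, U]`, and the identity `A(U₁U₂) = U₂* A(U₁) U₂ + A(U₂)` reduces additivity of the
index to additivity of the trace and its invariance under unitary conjugation, the latter being
an instance of the cyclicity `Tr(AB) = Tr(BA)` for `A` of finite rank.
-/

section FiniteRank

variable {H : Type*} [NormedAddCommGroup H] [InnerProductSpace ℂ H]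

theorem FiniteRankOp.mul_left_s4 (A : H →L[ℂ] H) {B : H →L[ℂ] H} (hB : FiniteRankOp B) :
    FiniteRankOp (A * B) := by
  have : FiniteDimensional ℂ (LinearMap.range (B : H →ₗ[ℂ] H)) := hB
  unfold FiniteRankOp
  rw [ContinuousLinearMap.toLinearMap_mul, Module.End.mul_eq_comp, LinearMap.range_comp]
  exact Module.Finite.map _ _

theorem FiniteRankOp.mul_right {A : H →L[ℂ] H} (hA : FiniteRankOp A) (B : H →L[ℂ] H) :
    FiniteRankOp (A * B) := by
  have : FiniteDimensional ℂ (LinearMap.range (A : H →ₗ[ℂ] H)) := hA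
  unfold FiniteRankOp
  rw [ContinuousLinearMap.toLinearMap_mul, Module.End.mul_eq_comp]
  exact Submodule.finiteDimensional_of_le (LinearMap.range_comp_le_range _ _)

theorem FiniteRankOp.add {A B : H →L[ℂ] H} (hA : FiniteRankOp A) (hB : FiniteRankOp B) :
    FiniteRankOp (A + B) := by
  have : FiniteDimensional ℂ (LinearMap.range (A : H →ₗ[ℂ] H)) := hA
  have : FiniteDimensional ℂ (LinearMap.range (B : H →ₗ[ℂ] H)) := hB
  unfold FiniteRankOp
  rw [ContinuousLinearMap.toLinearMap_add]
  exact Submodule.finiteDimensional_of_le (LinearMap.range_add_le _ _)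

theorem trFR_eq_trace_restrict (T : H →L[ℂ] H) (W : Submodule ℂ H) [FiniteDimensional ℂ W]
    (hW : ∀ x, T x ∈ W) :
    trFR T = LinearMap.trace ℂ W ((T : H →ₗ[ℂ] H).restrict fun x _ => hW x) := by
  have hRW : LinearMap.range (T : H →ₗ[ℂ] H) ≤ W := by
    rintro _ ⟨x, rfl⟩
    exact hW x
  have : FiniteDimensional ℂ (LinearMap.range (T : H →ₗ[ℂ] H)) :=
    Submodule.finiteDimensional_of_le hRW
  let g : W →ₗ[ℂ] LinearMap.range (T : H →ₗ[ℂ] H) :=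
    ((T : H →ₗ[ℂ] H).domRestrict W).codRestrict _ fun x => LinearMap.mem_range_self _ _
  have hRange : (T : H →ₗ[ℂ] H).restrict (fun x _ => LinearMap.mem_range_self _ x) =
      g ∘ₗ Submodule.inclusion hRW := rfl
  have hRestrict : (T : H →ₗ[ℂ] H).restrict (fun x _ => hW x) =
      Submodule.inclusion hRW ∘ₗ g := rfl
  rw [trFR, hRange, hRestrict, LinearMap.trace_comp_comm']

theorem trFR_add {A B : H →L[ℂ] H} (hA : FiniteRankOp A) (hB : FiniteRankOp B) :
    trFR (A + B) = trFR A + trFR B := by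
  have : FiniteDimensional ℂ (LinearMap.range (A : H →ₗ[ℂ] H)) := hA
  have : FiniteDimensional ℂ (LinearMap.range (B : H →ₗ[ℂ] H)) := hB
  let W := LinearMap.range (A : H →ₗ[ℂ] H) ⊔ LinearMap.range (B : H →ₗ[ℂ] H)
  have hAW : ∀ x, A x ∈ W := fun x => Submodule.mem_sup_left (LinearMap.mem_range_self _ x)
  have hBW : ∀ x, B x ∈ W := fun x => Submodule.mem_sup_right (LinearMap.mem_range_self _ x)
  have hABW : ∀ x, (A + B) x ∈ W := fun x => add_mem (hAW x) (hBW x)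
  rw [trFR_eq_trace_restrict A W hAW, trFR_eq_trace_restrict B W hBW,
    trFR_eq_trace_restrict (A + B) W hABW, ← map_add]
  rfl

theorem trFR_mul_comm {A : H →L[ℂ] H} (hA : FiniteRankOp A) (B : H →L[ℂ] H) :
    trFR (A * B) = trFR (B * A) := by
  let R := LinearMap.range (A : H →ₗ[ℂ] H)
  have : FiniteDimensional ℂ R := hA
  let W := R.map (B : H →ₗ[ℂ] H)
  let f : R →ₗ[ℂ] W :=
    ((B : H →ₗ[ℂ] H).domRestrict R).codRestrict W fun x => Submodule.mem_map_of_mem x.2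
  let g : W →ₗ[ℂ] R :=
    ((A : H →ₗ[ℂ] H).domRestrict W).codRestrict R fun x => LinearMap.mem_range_self _ _
  have hAB : ∀ x, (A * B) x ∈ R := fun x => LinearMap.mem_range_self _ (B x)
  have hBA : ∀ x, (B * A) x ∈ W := fun x =>
    Submodule.mem_map_of_mem (LinearMap.mem_range_self _ x)
  rw [trFR_eq_trace_restrict _ R hAB, trFR_eq_trace_restrict _ W hBA]
  exact LinearMap.trace_comp_comm' f g

end FiniteRank

section StarMul

variable {R : Type*} [Ring R] [StarMul R]

theorem star_mul_mul_sub_eq_star_mul_commutator_s4 {U : R} (hU : star U * U = 1) (P : R) :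
    star U * P * U - P = star U * (P * U - U * P) := by
  rw [mul_sub, ← mul_assoc, ← mul_assoc, hU, one_mul]

theorem star_mul_mul_sub_mul (U₁ U₂ P : R) :
    star (U₁ * U₂) * P * (U₁ * U₂) - P =
      star U₂ * (star U₁ * P * U₁ - P) * U₂ + (star U₂ * P * U₂ - P) := by
  rw [star_mul]
  noncomm_ring

end StarMul

section Conjugation

variable {H : Type*} [NormedAddCommGroup H] [InnerProductSpace ℂ H] [CompleteSpace H]

theorem trFR_star_mul_mul {U : H →L[ℂ] H} (hU : U * star U = 1) {T : H →L[ℂ] H}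
    (hT : FiniteRankOp T) : trFR (star U * T * U) = trFR T := by
  rw [trFR_mul_comm (hT.mul_left_s4 _), ← mul_assoc, hU, one_mul]

theorem FiniteRankOp.star_mul_mul_sub {U P : H →L[ℂ] H} (hU : star U * U = 1)
    (hUP : FiniteRankOp (P * U - U * P)) : FiniteRankOp (star U * P * U - P) := by
  rw [star_mul_mul_sub_eq_star_mul_commutator_s4 hU]
  exact hUP.mul_left_s4 _

end Conjugation

theorem index_additive_general
    {H : Type*} [NormedAddCommGroup H] [InnerProductSpace ℂ H] [CompleteSpace H]
    (U₁ U₂ P : H →L[ℂ] H)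
    (hU₁ : U₁ ∈ unitary (H →L[ℂ] H)) (hU₂ : U₂ ∈ unitary (H →L[ℂ] H))
    (hfin₁ : FiniteRankOp (P * U₁ - U₁ * P))
    (hfin₂ : FiniteRankOp (P * U₂ - U₂ * P)) :
    ind P (U₁ * U₂) = ind P U₁ + ind P U₂ := by
  have h₁ := hfin₁.star_mul_mul_sub (Unitary.star_mul_self_of_mem hU₁)
  have h₂ := hfin₂.star_mul_mul_sub (Unitary.star_mul_self_of_mem hU₂)
  rw [ind, ind, ind, star_mul_mul_sub_mul, trFR_add ((h₁.mul_left_s4 _).mul_right _) h₂,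
    trFR_star_mul_mul (Unitary.mul_star_self_of_mem hU₂) h₁]

/-- For unitaries `U₁`, `U₂` whose commutators with the projection `P`
have finite rank, the index is additive: `ind(U₁U₂) = ind(U₁) + ind(U₂)`. -/
theorem index_additive
    {H : Type*} [NormedAddCommGroup H] [InnerProductSpace ℂ H] [CompleteSpace H]
    (U₁ U₂ P : H →L[ℂ] H)
    (hU₁ : U₁ ∈ unitary (H →L[ℂ] H)) (hU₂ : U₂ ∈ unitary (H →L[ℂ] H))
    (hP_proj : P ∘L P = P) (hP_sa : IsSelfAdjoint P)
    (hfin₁ : FiniteRankOp (P * U₁ - U₁ * P))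
    (hfin₂ : FiniteRankOp (P * U₂ - U₂ * P)) :
    ind P (U₁ * U₂) = ind P U₁ + ind P U₂ :=
  index_additive_general U₁ U₂ P hU₁ hU₂ hfin₁ hfin₂
end

section
/- Let Û : ℝ → Mₙ(ℂ) be given by Û(p) = Σ_{x=-L}^{L} Uₓ e^{ipx} with fixed matrices Uₓ, and suppose Û(p) is unitary for every p ∈ ℝ. Then det Û(p) = C e^{inp} for some constant C with |C| = 1 and some integer n. -/
/-!
Multiplying the symbol by `z ^ L` turns it into a polynomial matrix `V` with
`V(e^{ip}) = e^{ipL} Û(p)`, so `Q = det V` is a polynomial of modulus one on the unit circle.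
With `d = deg Q` and `Q*(z) = z^d conj(Q(1/conj z))`, the identity `Q Q* = X^d` holds on the
circle, hence as polynomials, so `Q` divides `X^d` and is a monomial.
-/

open Complex ComplexConjugate Polynomial

namespace Polynomial

theorem eq_zero_of_eval_eq_zero_on_unit_circle {Q : ℂ[X]}
    (h : ∀ z : ℂ, ‖z‖ = 1 → Q.eval z = 0) : Q = 0 := by
  have hconn : IsConnected (Metric.sphere (0 : ℂ) 1) :=
    isConnected_sphere (by simp [rank_real_complex]) 0 zero_le_one
  exact Q.eq_zero_of_infinite_isRoot <|
    (hconn.isPreconnected.infinite_of_nontrivial ⟨1, by simp, -1, by simp, by norm_num⟩).mono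
      fun z hz => h z (by simpa using hz)

theorem eval_reflect_map_conj_of_norm_eq_one (Q : ℂ[X]) {z : ℂ} (hz : ‖z‖ = 1) :
    (reflect Q.natDegree (Q.map (starRingEnd ℂ))).eval z = z ^ Q.natDegree * conj (Q.eval z) := by
  have hz0 : z ≠ 0 := norm_ne_zero_iff.mp (by simp [hz])
  let := invertibleOfNonzero (inv_ne_zero hz0)
  have := eval₂_reflect_mul_pow (RingHom.id ℂ) z⁻¹ Q.natDegree (Q.map (starRingEnd ℂ))
    natDegree_map_le
  rw [invOf_eq_inv, inv_inv, ← eval, ← eval, eval_map, inv_eq_conj hz, eval₂_at_apply,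
    ← inv_eq_conj hz, inv_pow, mul_inv_eq_iff_eq_mul₀ (pow_ne_zero _ hz0)] at this
  rw [this, mul_comm]

theorem mul_reflect_map_conj_eq_X_pow {Q : ℂ[X]} (h : ∀ z : ℂ, ‖z‖ = 1 → ‖Q.eval z‖ = 1) :
    Q * reflect Q.natDegree (Q.map (starRingEnd ℂ)) = X ^ Q.natDegree := by
  refine sub_eq_zero.mp (eq_zero_of_eval_eq_zero_on_unit_circle fun z hz => ?_)
  rw [eval_sub, eval_mul, eval_reflect_map_conj_of_norm_eq_one Q hz, eval_pow, eval_X,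
    mul_left_comm, mul_conj', h z hz]
  simp

theorem exists_eq_C_mul_X_pow_of_norm_eval_eq_one {Q : ℂ[X]}
    (h : ∀ z : ℂ, ‖z‖ = 1 → ‖Q.eval z‖ = 1) :
    ∃ (c : ℂ) (k : ℕ), ‖c‖ = 1 ∧ Q = C c * X ^ k := by
  obtain ⟨k, -, hk⟩ :=
    (dvd_prime_pow prime_X _).mp (Dvd.intro _ (mul_reflect_map_conj_eq_X_pow h))
  obtain ⟨u, hu⟩ := hk.symm
  obtain ⟨c, -, hc⟩ := isUnit_iff.mp u.isUnit
  have hQ : Q = C c * X ^ k := by rw [← hu, ← hc, mul_comm]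
  exact ⟨c, k, by simpa [hQ] using h 1 norm_one, hQ⟩

end Polynomial

section ShiftedSymbol

variable {K n : Type*} [Field K] (L : ℕ) (U : ℤ → Matrix n n K)

noncomputable def shiftedSymbol : Matrix n n K[X] :=
  ∑ x ∈ Finset.Icc (-(L : ℤ)) L, (X : K[X]) ^ (x + L).toNat • (U x).map C

theorem map_eval_shiftedSymbol {z : K} (hz : z ≠ 0) :
    (shiftedSymbol L U).map (eval z) = z ^ L • ∑ x ∈ Finset.Icc (-(L : ℤ)) L, z ^ x • U x := by
  ext i j
  simp only [shiftedSymbol, Matrix.map_apply, Matrix.sum_apply, Matrix.smul_apply,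
    eval_finsetSum, smul_eq_mul, Finset.mul_sum, eval_mul, eval_pow, eval_X, eval_C]
  refine Finset.sum_congr rfl fun x hx => ?_
  have hxL : 0 ≤ x + L := by linarith [(Finset.mem_Icc.mp hx).1]
  rw [← zpow_natCast, Int.toNat_of_nonneg hxL, zpow_add₀ hz, zpow_natCast]
  ring

theorem eval_det_shiftedSymbol [Fintype n] [DecidableEq n] {z : K} (hz : z ≠ 0) :
    (shiftedSymbol L U).det.eval z =
      z ^ (L * Fintype.card n) * (∑ x ∈ Finset.Icc (-(L : ℤ)) L, z ^ x • U x).det := by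
  rw [← coe_evalRingHom, RingHom.map_det, RingHom.mapMatrix_apply, coe_evalRingHom,
    map_eval_shiftedSymbol L U hz, Matrix.det_smul, pow_mul]

end ShiftedSymbol

/-- Let `Û(p) = ∑_{x=-L}^{L} Uₓ e^{ipx}` be a matrix Laurent polynomial which
is unitary for every real `p`.  Then `det Û(p) = C e^{inp}` for some constant `C` with
`|C| = 1` and some integer `n`. -/
theorem det_of_unitary_symbol_is_monomial
    {N : ℕ} (L : ℕ) (U : ℤ → Matrix (Fin N) (Fin N) ℂ)
    (Uhat : ℝ → Matrix (Fin N) (Fin N) ℂ)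
    (hUhat : ∀ p : ℝ, Uhat p = ∑ x ∈ Finset.Icc (-(L : ℤ)) (L : ℤ),
      Complex.exp (Complex.I * p * x) • U x)
    (hunitary : ∀ p : ℝ, Uhat p ∈ Matrix.unitaryGroup (Fin N) ℂ) :
    ∃ (C : ℂ) (n : ℤ), ‖C‖ = 1 ∧
      ∀ p : ℝ, (Uhat p).det = C * Complex.exp (Complex.I * n * p) := by
  have hexp (p : ℝ) (m : ℤ) : exp (I * p * m) = exp (p * I) ^ m := by
    rw [← exp_int_mul]; ring_nf
  have hQ (p : ℝ) : (shiftedSymbol L U).det.eval (exp (p * I)) =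
      exp (p * I) ^ (L * N) * (Uhat p).det := by
    simp_rw [eval_det_shiftedSymbol L U (exp_ne_zero _), Fintype.card_fin, hUhat, hexp]
  have hdet (p : ℝ) : ‖(Uhat p).det‖ = 1 :=
    CStarRing.norm_of_mem_unitary (Matrix.det_of_mem_unitary (hunitary p))
  have hnorm (z : ℂ) (hz : ‖z‖ = 1) : ‖(shiftedSymbol L U).det.eval z‖ = 1 := by
    rw [← norm_mul_exp_arg_mul_I z, hz, ofReal_one, one_mul, hQ, norm_mul, norm_pow,
      norm_exp_ofReal_mul_I, hdet]
    simp
  obtain ⟨c, k, hc, hmonomial⟩ := exists_eq_C_mul_X_pow_of_norm_eval_eq_one hnorm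
  refine ⟨c, k - (L * N : ℕ), hc, fun p => ?_⟩
  have h := hQ p
  simp only [hmonomial, eval_mul, eval_C, eval_pow, eval_X] at h
  rw [mul_right_comm, hexp, zpow_sub₀ (exp_ne_zero _), zpow_natCast, zpow_natCast]
  field_simp
  linear_combination -h
end

section
/- For a translation-invariant unitary Û(p) = Σ_{x=-L}^{L} Uₓ e^{ipx} with matrix coefficients Uₓ ∈ Mₙ(ℂ), the winding number n defined by det Û(p) = C e^{inp} satisfies n = Σ_{m ∈ ℤ} m · Tr(Uₘ* Uₘ). -/
/-!
By Jacobi's formula and unitarity (`adj Û = det Û · Û*`), `(det Û)' = det Û · Tr(Û* Û')`;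
comparing with `(C e^{inp})' = i n · C e^{inp}` gives `Tr(Û(p)* Û'(p)) = i n` for every `p`.
The left side expands to the trigonometric polynomial `∑_{x,y} i x Tr(U_y* U_x) e^{i(x-y)p}`,
and a constant trigonometric polynomial equals its constant term, which is read off by
averaging over `[0, 2π]`: here it is `∑_x i x Tr(U_x* U_x)`.
-/

open Complex Matrix Finset

namespace Matrix

variable {ι : Type*} [Fintype ι]

theorem trace_conjTranspose_sum_smul_mul_sum_smul {κ R : Type*} [CommSemiring R] [StarRing R]
    (T : Finset κ) (a b : κ → R) (U : κ → Matrix ι ι R) :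
    ((∑ y ∈ T, a y • U y)ᴴ * ∑ x ∈ T, b x • U x).trace
      = ∑ x ∈ T, ∑ y ∈ T, star (a y) * b x * ((U y)ᴴ * U x).trace := by
  simp only [conjTranspose_sum, conjTranspose_smul, sum_mul, mul_sum, smul_mul,
    Matrix.mul_smul, trace_sum, trace_smul, smul_eq_mul]
  exact sum_congr rfl fun x _ => sum_congr rfl fun y _ => by ring

variable [DecidableEq ι]

theorem trace_adjugate_mul {R : Type*} [CommRing R] (A B : Matrix ι ι R) :
    (adjugate A * B).trace = ∑ i, (A.updateCol i fun k => B k i).det := by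
  refine sum_congr rfl fun i _ => ?_
  rw [diag_apply, ← cramer_apply, cramer_eq_adjugate_mulVec]
  rfl

theorem det_updateCol_eq_sum_perm {R : Type*} [CommRing R] (A : Matrix ι ι R) (i : ι)
    (b : ι → R) :
    (A.updateCol i b).det = ∑ σ : Equiv.Perm ι,
      ((Equiv.Perm.sign σ : ℤ) : R) * (b (σ i) * ∏ j ∈ univ.erase i, A (σ j) j) := by
  rw [det_apply']
  refine sum_congr rfl fun σ _ => ?_
  rw [← mul_prod_erase univ _ (mem_univ i)]
  congr 2
  · simp
  · exact prod_congr rfl fun j hj => by simp [(mem_erase.mp hj).1]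

theorem hasDerivAt_det {𝕜 𝔸 : Type*} [NontriviallyNormedField 𝕜] [NormedCommRing 𝔸]
    [NormedAlgebra 𝕜 𝔸] {A : 𝕜 → Matrix ι ι 𝔸} {A' : Matrix ι ι 𝔸} {x : 𝕜}
    (hA : ∀ i j, HasDerivAt (fun y => A y i j) (A' i j) x) :
    HasDerivAt (fun y => (A y).det) (adjugate (A x) * A').trace x := by
  rw [show (fun y => (A y).det) = _ from funext fun y => det_apply' (A y)]
  refine (HasDerivAt.fun_sum fun σ _ =>
    (HasDerivAt.fun_finsetProd fun i _ => hA (σ i) i).const_mul _).congr_deriv ?_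
  simp only [trace_adjugate_mul, det_updateCol_eq_sum_perm, mul_sum, smul_eq_mul]
  rw [sum_comm]
  exact sum_congr rfl fun σ _ => sum_congr rfl fun i _ => by ring

theorem adjugate_eq_det_smul_conjTranspose_of_mem_unitaryGroup {R : Type*} [CommRing R]
    [StarRing R] {A : Matrix ι ι R} (hA : A ∈ unitaryGroup ι R) : adjugate A = A.det • Aᴴ :=
  calc adjugate A = (Aᴴ * A) * adjugate A := by
        rw [← star_eq_conjTranspose, mem_unitaryGroup_iff'.mp hA, Matrix.one_mul]
    _ = A.det • Aᴴ := by rw [Matrix.mul_assoc, mul_adjugate, Matrix.mul_smul, Matrix.mul_one]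

theorem hasDerivAt_det_of_mem_unitaryGroup {𝕜 𝔸 : Type*} [NontriviallyNormedField 𝕜]
    [NormedCommRing 𝔸] [StarRing 𝔸] [NormedAlgebra 𝕜 𝔸] {A : 𝕜 → Matrix ι ι 𝔸}
    {A' : Matrix ι ι 𝔸} {x : 𝕜} (hA : ∀ i j, HasDerivAt (fun y => A y i j) (A' i j) x)
    (hU : A x ∈ unitaryGroup ι 𝔸) :
    HasDerivAt (fun y => (A y).det) ((A x).det * ((A x)ᴴ * A').trace) x := by
  simpa [adjugate_eq_det_smul_conjTranspose_of_mem_unitaryGroup hU, Matrix.smul_mul,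
    trace_smul] using hasDerivAt_det hA

end Matrix

theorem hasDerivAt_cexp_mul_ofReal (c : ℂ) (p : ℝ) :
    HasDerivAt (fun q : ℝ => exp (c * q)) (c * exp (c * p)) p := by
  simpa [mul_comm] using (((hasDerivAt_id p).ofReal_comp).const_mul c).cexp

theorem hasDerivAt_sum_exp_smul_apply {ι : Type*} (T : Finset ℤ) (U : ℤ → Matrix ι ι ℂ) (p : ℝ)
    (i j : ι) :
    HasDerivAt (fun q : ℝ => (∑ x ∈ T, exp (I * q * x) • U x) i j)
      ((∑ x ∈ T, (I * x * exp (I * p * x)) • U x) i j) p := by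
  simp only [Matrix.sum_apply, Matrix.smul_apply, smul_eq_mul]
  exact HasDerivAt.fun_sum fun x _ => by
    simpa only [mul_right_comm I] using (hasDerivAt_cexp_mul_ofReal (I * x) p).mul_const (U x i j)

theorem trace_conjTranspose_mul_eq_of_det_eq_exp {ι : Type*} [Fintype ι] [DecidableEq ι]
    {A : ℝ → Matrix ι ι ℂ} {A' : Matrix ι ι ℂ} {p : ℝ}
    (hA : ∀ i j, HasDerivAt (fun q => A q i j) (A' i j) p) (hU : A p ∈ unitaryGroup ι ℂ)
    {C c : ℂ} (hdet : ∀ q : ℝ, (A q).det = C * exp (c * q)) :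
    ((A p)ᴴ * A').trace = c := by
  have hexp : HasDerivAt (fun q => (A q).det) ((A p).det * c) p := by
    rw [funext hdet, hdet p, mul_assoc, mul_comm (exp _)]
    exact (hasDerivAt_cexp_mul_ofReal c p).const_mul C
  exact mul_left_cancel₀ (UnitaryGroup.det_isUnit ⟨_, hU⟩).ne_zero
    ((hasDerivAt_det_of_mem_unitaryGroup hA hU).unique hexp)

theorem star_exp_I_mul_mul_exp_I_mul (p : ℝ) (x y : ℤ) :
    star (exp (I * p * y)) * exp (I * p * x) = exp (I * (x - y : ℤ) * p) := by
  rw [star_def, ← exp_conj, ← exp_add]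
  congr 1
  simp only [map_mul, conj_I, conj_ofReal, map_intCast]
  push_cast
  ring

theorem integral_exp_I_mul_int_mul (k : ℤ) :
    ∫ p in (0 : ℝ)..2 * Real.pi, exp (I * k * p) = if k = 0 then (2 * Real.pi : ℂ) else 0 := by
  split_ifs with hk
  · simp [hk]
  · rw [integral_exp_mul_complex (mul_ne_zero I_ne_zero (Int.cast_ne_zero.mpr hk))]
    push_cast
    rw [show I * k * (2 * Real.pi) = k * (2 * Real.pi * I) by ring, exp_int_mul_two_pi_mul_I]
    simp

theorem sum_diag_eq_of_sum_sum_exp_eq {T : Finset ℤ} {a : ℤ → ℤ → ℂ} {c : ℂ}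
    (h : ∀ p : ℝ, ∑ x ∈ T, ∑ y ∈ T, a x y * exp (I * (x - y : ℤ) * p) = c) :
    c = ∑ x ∈ T, a x x := by
  have hmean : 2 * Real.pi * c = 2 * Real.pi * ∑ x ∈ T, a x x :=
    calc 2 * Real.pi * c = ∫ p in (0 : ℝ)..2 * Real.pi, c := by simp
      _ = ∫ p in (0 : ℝ)..2 * Real.pi,
          ∑ x ∈ T, ∑ y ∈ T, a x y * exp (I * (x - y : ℤ) * p) := by simp only [h]
      _ = ∑ x ∈ T, ∑ y ∈ T, a x y * if x - y = 0 then (2 * Real.pi : ℂ) else 0 := by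
        rw [intervalIntegral.integral_finsetSum fun x _ => by
          apply Continuous.intervalIntegrable; fun_prop]
        refine sum_congr rfl fun x _ => ?_
        rw [intervalIntegral.integral_finsetSum fun y _ => by
          apply Continuous.intervalIntegrable; fun_prop]
        simp only [intervalIntegral.integral_const_mul, integral_exp_I_mul_int_mul]
      _ = 2 * Real.pi * ∑ x ∈ T, a x x := by
        simp only [sub_eq_zero, mul_ite, mul_zero, sum_ite_eq, mul_sum]
        exact sum_congr rfl fun x hx => by rw [if_pos hx, mul_comm]
  exact mul_left_cancel₀ (by simp [Real.pi_ne_zero]) hmean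

/-- For a translation-invariant unitary `Û(p) = ∑_{x=-L}^{L} Uₓ e^{ipx}`,
the winding number `n` defined by `det Û(p) = C e^{inp}` satisfies
`n = ∑ₘ m · Tr(Uₘ* Uₘ)`. -/
theorem winding_number_eq_index_sum
    {N : ℕ} (L : ℕ) (U : ℤ → Matrix (Fin N) (Fin N) ℂ)
    (Uhat : ℝ → Matrix (Fin N) (Fin N) ℂ)
    (hUhat : ∀ p : ℝ, Uhat p = ∑ x ∈ Finset.Icc (-(L : ℤ)) (L : ℤ),
      Complex.exp (Complex.I * p * x) • U x)
    (hunitary : ∀ p : ℝ, Uhat p ∈ Matrix.unitaryGroup (Fin N) ℂ)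
    (C : ℂ) (n : ℤ)
    (hdet : ∀ p : ℝ, (Uhat p).det = C * Complex.exp (Complex.I * n * p)) :
    (n : ℂ) = ∑ m ∈ Finset.Icc (-(L : ℤ)) (L : ℤ),
      (m : ℂ) * Matrix.trace ((U m)ᴴ * U m) := by
  set T := Finset.Icc (-(L : ℤ)) (L : ℤ)
  have hderiv (p : ℝ) (i j : Fin N) : HasDerivAt (fun q => Uhat q i j)
      ((∑ x ∈ T, (I * x * exp (I * p * x)) • U x) i j) p := by
    simpa only [hUhat] using hasDerivAt_sum_exp_smul_apply T U p i j
  have htrace (p : ℝ) : ∑ x ∈ T, ∑ y ∈ T,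
      I * x * ((U y)ᴴ * U x).trace * exp (I * (x - y : ℤ) * p) = I * n := by
    rw [← trace_conjTranspose_mul_eq_of_det_eq_exp (hderiv p) (hunitary p) hdet, hUhat,
      trace_conjTranspose_sum_smul_mul_sum_smul]
    refine sum_congr rfl fun x _ => sum_congr rfl fun y _ => ?_
    rw [← star_exp_I_mul_mul_exp_I_mul p x y]
    ring
  have hdiag := sum_diag_eq_of_sum_sum_exp_eq htrace
  simp only [mul_assoc, ← mul_sum] at hdiag
  exact mul_left_cancel₀ I_ne_zero hdiag
end

section
/- Let A₁ ⊆ B₁ ⊗ B₂ and A₂ ⊆ B₂ ⊗ B₃ be subalgebras such that A₁ ⊗ 1₃ and 1₁ ⊗ A₂ commute elementwise inside B₁ ⊗ B₂ ⊗ B₃. Then the support algebras Supp(A₁, B₂) and Supp(A₂, B₂) commute elementwise in B₂. -/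
open scoped TensorProduct

/-!
Applying `φ ⊗ id ⊗ ψ` for linear functionals `φ` on `B₁` and `ψ` on `B₃` turns the commutation
of `a₁ ⊗ 1` and `1 ⊗ a₂` into the commutation of the slices `(φ ⊗ id) a₁` and `(id ⊗ ψ) a₂` in
`B₂`, since slice maps are `B₂`-bimodule maps. Expanding in a basis of `B₁` (resp. `B₃`), every
element of `A₁` (resp. `A₂`) lies in `B₁ ⊗ D₁` (resp. `D₂ ⊗ B₃`), where `Dᵢ` is the algebra
generated by the slices of `Aᵢ`. So `Supp(Aᵢ, B₂) ≤ Dᵢ`, and `D₁`, `D₂` commute because their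
generators do.
-/

namespace TensorProduct

variable {R M N : Type*} [CommSemiring R]

section Module

variable [AddCommMonoid M] [AddCommMonoid N] [Module R M] [Module R N]

def sliceLeft (φ : M →ₗ[R] R) : M ⊗[R] N →ₗ[R] N :=
  (TensorProduct.lid R N).toLinearMap ∘ₗ φ.rTensor N

def sliceRight (ψ : N →ₗ[R] R) : M ⊗[R] N →ₗ[R] M :=
  (TensorProduct.rid R M).toLinearMap ∘ₗ ψ.lTensor M

@[simp]
lemma sliceLeft_tmul (φ : M →ₗ[R] R) (m : M) (n : N) : sliceLeft φ (m ⊗ₜ n) = φ m • n := by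
  simp [sliceLeft]

@[simp]
lemma sliceRight_tmul (ψ : N →ₗ[R] R) (m : M) (n : N) : sliceRight ψ (m ⊗ₜ n) = ψ n • m := by
  simp [sliceRight]

def slicesLeft (s : Set (M ⊗[R] N)) : Set N :=
  {n | ∃ x ∈ s, ∃ φ : M →ₗ[R] R, sliceLeft φ x = n}

def slicesRight (s : Set (M ⊗[R] N)) : Set M :=
  {m | ∃ x ∈ s, ∃ ψ : N →ₗ[R] R, sliceRight ψ x = m}

end Module

section Algebra

variable [Semiring M] [Semiring N] [Algebra R M] [Algebra R N]

lemma sliceLeft_mul_one_tmul (φ : M →ₗ[R] R) (x : M ⊗[R] N) (n : N) :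
    sliceLeft φ (x * (1 ⊗ₜ n)) = sliceLeft φ x * n := by
  induction x with
  | zero => simp
  | tmul => simp
  | add x y hx hy => simp only [add_mul, map_add, hx, hy]

lemma sliceLeft_one_tmul_mul (φ : M →ₗ[R] R) (x : M ⊗[R] N) (n : N) :
    sliceLeft φ ((1 ⊗ₜ n) * x) = n * sliceLeft φ x := by
  induction x with
  | zero => simp
  | tmul => simp
  | add x y hx hy => simp only [mul_add, map_add, hx, hy]

lemma sliceRight_tmul_one_mul (ψ : N →ₗ[R] R) (m : M) (x : M ⊗[R] N) :
    sliceRight ψ ((m ⊗ₜ 1) * x) = m * sliceRight ψ x := by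
  induction x with
  | zero => simp
  | tmul => simp
  | add x y hx hy => simp only [mul_add, map_add, hx, hy]

lemma sliceRight_mul_tmul_one (ψ : N →ₗ[R] R) (x : M ⊗[R] N) (m : M) :
    sliceRight ψ (x * (m ⊗ₜ 1)) = sliceRight ψ x * m := by
  induction x with
  | zero => simp
  | tmul => simp
  | add x y hx hy => simp only [add_mul, map_add, hx, hy]

lemma mem_range_map_val_of_forall_sliceLeft_mem [Module.Free R M] (C : Subalgebra R N)
    {x : M ⊗[R] N} (hx : ∀ φ : M →ₗ[R] R, sliceLeft φ x ∈ C) :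
    x ∈ (Algebra.TensorProduct.map (AlgHom.id R M) C.val).range := by
  classical
  let b := Module.Free.chooseBasis R M
  have hsum : ((equivFinsuppOfBasisLeft b x).sum fun i n ↦ b i ⊗ₜ n) = x := by
    rw [← equivFinsuppOfBasisLeft_symm_apply, LinearEquiv.symm_apply_apply]
  rw [← hsum]
  refine Subalgebra.sum_mem _ fun i _ ↦ ⟨b i ⊗ₜ ⟨_, hx (b.coord i)⟩, ?_⟩
  simp [equivFinsuppOfBasisLeft_apply, sliceLeft]

lemma mem_range_map_val_of_forall_sliceRight_mem [Module.Free R N] (C : Subalgebra R M)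
    {x : M ⊗[R] N} (hx : ∀ ψ : N →ₗ[R] R, sliceRight ψ x ∈ C) :
    x ∈ (Algebra.TensorProduct.map C.val (AlgHom.id R N)).range := by
  classical
  let b := Module.Free.chooseBasis R N
  have hsum : ((equivFinsuppOfBasisRight b x).sum fun i m ↦ m ⊗ₜ b i) = x := by
    rw [← equivFinsuppOfBasisRight_symm_apply, LinearEquiv.symm_apply_apply]
  rw [← hsum]
  refine Subalgebra.sum_mem _ fun i _ ↦ ⟨⟨_, hx (b.coord i)⟩ ⊗ₜ b i, ?_⟩
  simp [equivFinsuppOfBasisRight_apply, sliceRight]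

lemma sInf_le_adjoin_slicesLeft [Module.Free R M] (s : Set (M ⊗[R] N)) :
    sInf {C : Subalgebra R N |
        ∀ a ∈ s, a ∈ (Algebra.TensorProduct.map (AlgHom.id R M) C.val).range} ≤
      Algebra.adjoin R (slicesLeft s) :=
  sInf_le fun a ha ↦
    mem_range_map_val_of_forall_sliceLeft_mem _ fun φ ↦ Algebra.subset_adjoin ⟨a, ha, φ, rfl⟩

lemma sInf_le_adjoin_slicesRight [Module.Free R N] (s : Set (M ⊗[R] N)) :
    sInf {C : Subalgebra R M |
        ∀ a ∈ s, a ∈ (Algebra.TensorProduct.map C.val (AlgHom.id R N)).range} ≤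
      Algebra.adjoin R (slicesRight s) :=
  sInf_le fun a ha ↦
    mem_range_map_val_of_forall_sliceRight_mem _ fun ψ ↦ Algebra.subset_adjoin ⟨a, ha, ψ, rfl⟩

end Algebra

end TensorProduct

lemma Algebra.commute_of_mem_adjoin_of_mem_adjoin {R A : Type*} [CommSemiring R] [Semiring A]
    [Algebra R A] {s t : Set A} {a b : A} (ha : a ∈ adjoin R s) (hb : b ∈ adjoin R t)
    (h : ∀ x ∈ s, ∀ y ∈ t, Commute x y) : Commute a b :=
  (commute_of_mem_adjoin_of_forall_mem_commute ha fun x hx ↦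
    (commute_of_mem_adjoin_of_forall_mem_commute hb (h x hx)).symm).symm

section SliceCommute

open TensorProduct Algebra.TensorProduct

variable {R B₁ B₂ B₃ : Type*} [CommSemiring R] [Semiring B₁] [Semiring B₂] [Semiring B₃]
  [Algebra R B₁] [Algebra R B₂] [Algebra R B₃]

lemma sliceRight_assoc_symm_includeRight (ψ : B₃ →ₗ[R] R) (y : B₂ ⊗[R] B₃) :
    sliceRight ψ ((Algebra.TensorProduct.assoc R R R B₁ B₂ B₃).symm (includeRight y)) =
      (1 : B₁) ⊗ₜ sliceRight ψ y := by
  induction y with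
  | zero => simp
  | tmul => simp [TensorProduct.tmul_smul]
  | add x y hx hy => simp only [map_add, hx, hy, TensorProduct.tmul_add]

lemma commute_sliceLeft_sliceRight_of_commute (φ : B₁ →ₗ[R] R) (ψ : B₃ →ₗ[R] R)
    {x : B₁ ⊗[R] B₂} {y : B₂ ⊗[R] B₃}
    (h : Commute (includeLeft (S := R) x)
      ((Algebra.TensorProduct.assoc R R R B₁ B₂ B₃).symm (includeRight y))) :
    Commute (sliceLeft φ x) (sliceRight ψ y) :=
  calc sliceLeft φ x * sliceRight ψ y
      = sliceLeft φ (sliceRight ψ (includeLeft (S := R) x *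
          (Algebra.TensorProduct.assoc R R R B₁ B₂ B₃).symm (includeRight y))) := by
        rw [includeLeft_apply, sliceRight_tmul_one_mul, sliceRight_assoc_symm_includeRight,
          sliceLeft_mul_one_tmul]
    _ = sliceLeft φ (sliceRight ψ
          ((Algebra.TensorProduct.assoc R R R B₁ B₂ B₃).symm (includeRight y) *
            includeLeft (S := R) x)) := by
        rw [h.eq]
    _ = sliceRight ψ y * sliceLeft φ x := by
        rw [includeLeft_apply, sliceRight_mul_tmul_one, sliceRight_assoc_symm_includeRight,
          sliceLeft_one_tmul_mul]

end SliceCommute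

/-- If `A₁ ⊆ B₁ ⊗ B₂` and `A₂ ⊆ B₂ ⊗ B₃` are subalgebras whose natural
images `A₁ ⊗ 1₃` and `1₁ ⊗ A₂` commute elementwise inside `B₁ ⊗ B₂ ⊗ B₃`, then the
support algebras `Supp(A₁, B₂)` and `Supp(A₂, B₂)` commute elementwise in `B₂`. -/
theorem support_algebras_commute
    {d₁ d₂ d₃ : ℕ}
    (A₁ : Subalgebra ℂ (Matrix (Fin d₁) (Fin d₁) ℂ ⊗[ℂ] Matrix (Fin d₂) (Fin d₂) ℂ))
    (A₂ : Subalgebra ℂ (Matrix (Fin d₂) (Fin d₂) ℂ ⊗[ℂ] Matrix (Fin d₃) (Fin d₃) ℂ))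
    (ι₁ : (Matrix (Fin d₁) (Fin d₁) ℂ ⊗[ℂ] Matrix (Fin d₂) (Fin d₂) ℂ) →ₐ[ℂ]
      ((Matrix (Fin d₁) (Fin d₁) ℂ ⊗[ℂ] Matrix (Fin d₂) (Fin d₂) ℂ) ⊗[ℂ]
        Matrix (Fin d₃) (Fin d₃) ℂ))
    (hι₁ : ι₁ = Algebra.TensorProduct.includeLeft)
    (ι₂ : (Matrix (Fin d₂) (Fin d₂) ℂ ⊗[ℂ] Matrix (Fin d₃) (Fin d₃) ℂ) →ₐ[ℂ]
      ((Matrix (Fin d₁) (Fin d₁) ℂ ⊗[ℂ] Matrix (Fin d₂) (Fin d₂) ℂ) ⊗[ℂ]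
        Matrix (Fin d₃) (Fin d₃) ℂ))
    (hι₂ : ι₂ = ((Algebra.TensorProduct.assoc ℂ ℂ ℂ (Matrix (Fin d₁) (Fin d₁) ℂ)
        (Matrix (Fin d₂) (Fin d₂) ℂ) (Matrix (Fin d₃) (Fin d₃) ℂ)).symm.toAlgHom.comp
        Algebra.TensorProduct.includeRight))
    (hcomm : ∀ a₁ ∈ A₁, ∀ a₂ ∈ A₂, ι₁ a₁ * ι₂ a₂ = ι₂ a₂ * ι₁ a₁) :
    ∀ x ∈ sInf {C : Subalgebra ℂ (Matrix (Fin d₂) (Fin d₂) ℂ) |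
        ∀ a ∈ A₁, a ∈ (Algebra.TensorProduct.map
          (AlgHom.id ℂ (Matrix (Fin d₁) (Fin d₁) ℂ)) C.val).range},
      ∀ y ∈ sInf {C : Subalgebra ℂ (Matrix (Fin d₂) (Fin d₂) ℂ) |
        ∀ a ∈ A₂, a ∈ (Algebra.TensorProduct.map C.val
          (AlgHom.id ℂ (Matrix (Fin d₃) (Fin d₃) ℂ))).range},
        x * y = y * x := by
  intro x hx y hy
  have hx' := TensorProduct.sInf_le_adjoin_slicesLeft (SetLike.coe A₁) hx
  have hy' := TensorProduct.sInf_le_adjoin_slicesRight (SetLike.coe A₂) hy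
  refine Algebra.commute_of_mem_adjoin_of_mem_adjoin hx' hy' ?_
  rintro _ ⟨a₁, ha₁, φ, rfl⟩ _ ⟨a₂, ha₂, ψ, rfl⟩
  subst hι₁ hι₂
  exact commute_sliceLeft_sliceRight_of_commute φ ψ (hcomm a₁ ha₁ a₂ ha₂)
end

section
/- Let R₁ and R₂ be commuting unital subalgebras of M_d(ℂ), with R₁ ≅ M_{r₁}(ℂ) and R₂ ≅ M_{r₂}(ℂ), such that R₁ and R₂ together generate M_d(ℂ). Then d = r₁ · r₂ and the algebra generated by R₁ and R₂ is isomorphic to R₁ ⊗ R₂. -/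
open scoped TensorProduct

/-!
The multiplication map `R₁ ⊗ R₂ → M_d(ℂ)` is onto because its range contains `R₁` and `R₂`.
By the Kronecker product, `R₁ ⊗ R₂ ≅ M_{r₁ r₂}(ℂ)`, a simple ring unless `r₁ r₂ = 0`, so the map
is also injective (when `r₁ r₂ = 0` its domain is trivial). Comparing dimensions gives
`d² = (r₁ r₂)²`.
-/

namespace Algebra.TensorProduct

variable {R A B C : Type*} [CommSemiring R] [Semiring A] [Semiring B] [Semiring C]
  [Algebra R A] [Algebra R B] [Algebra R C]

theorem range_lift (f : A →ₐ[R] C) (g : B →ₐ[R] C) (hfg : ∀ x y, Commute (f x) (g y)) :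
    (lift f g hfg).range = f.range ⊔ g.range := by
  refine le_antisymm ?_ (sup_le ?_ ?_)
  · rintro _ ⟨x, rfl⟩
    induction x using TensorProduct.induction_on with
    | zero => simp
    | tmul a b =>
      exact mul_mem (Algebra.mem_sup_left ⟨a, rfl⟩) (Algebra.mem_sup_right ⟨b, rfl⟩)
    | add x y hx hy => rw [map_add]; exact add_mem hx hy
  · simpa using AlgHom.range_comp_le_range includeLeft (lift f g hfg)
  · simpa using AlgHom.range_comp_le_range includeRight (lift f g hfg)

theorem lift_val_surjective {S₁ S₂ : Subalgebra R C}
    (hcomm : ∀ (x : S₁) (y : S₂), Commute (x : C) (y : C)) (hgen : S₁ ⊔ S₂ = ⊤) :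
    Function.Surjective (lift S₁.val S₂.val hcomm) :=
  (AlgHom.range_eq_top _).mp <| (range_lift _ _ _).trans <| by
    rw [Subalgebra.range_val, Subalgebra.range_val, hgen]

end Algebra.TensorProduct

/-- Let `R₁, R₂` be commuting unital subalgebras of `M_d(ℂ)`, with
`R₁ ≅ M_{r₁}(ℂ)` and `R₂ ≅ M_{r₂}(ℂ)`, which together generate `M_d(ℂ)`.  Then
`d = r₁ · r₂` and the multiplication map `R₁ ⊗ R₂ → M_d(ℂ)` is an isomorphism onto the
algebra generated by `R₁` and `R₂` (i.e. it is bijective). -/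
theorem commuting_full_matrix_algebras
    {d r₁ r₂ : ℕ}
    (R₁ R₂ : Subalgebra ℂ (Matrix (Fin d) (Fin d) ℂ))
    (e₁ : R₁ ≃ₐ[ℂ] Matrix (Fin r₁) (Fin r₁) ℂ)
    (e₂ : R₂ ≃ₐ[ℂ] Matrix (Fin r₂) (Fin r₂) ℂ)
    (hcomm : ∀ (x : R₁) (y : R₂),
      Commute (x : Matrix (Fin d) (Fin d) ℂ) (y : Matrix (Fin d) (Fin d) ℂ))
    (hgen : R₁ ⊔ R₂ = ⊤) :
    d = r₁ * r₂ ∧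
    Function.Bijective (Algebra.TensorProduct.lift R₁.val R₂.val hcomm) := by
  set φ := Algebra.TensorProduct.lift R₁.val R₂.val hcomm
  let E : R₁ ⊗[ℂ] R₂ ≃ₐ[ℂ] Matrix (Fin r₁ × Fin r₂) (Fin r₁ × Fin r₂) ℂ :=
    (Algebra.TensorProduct.congr e₁ e₂).trans (Matrix.kroneckerAlgEquiv _ _ ℂ)
  have hsurj : Function.Surjective φ := Algebra.TensorProduct.lift_val_surjective hcomm hgen
  have hinj : Function.Injective φ := by
    rcases isEmpty_or_nonempty (Fin r₁ × Fin r₂) with _ | hne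
    · have := E.toEquiv.subsingleton
      exact Function.injective_of_subsingleton φ
    · have : Nonempty (Fin r₁) := hne.map Prod.fst
      have : Nontrivial R₁ := e₁.symm.injective.nontrivial
      have : Nontrivial (Matrix (Fin d) (Fin d) ℂ) := Subtype.val_injective.nontrivial (α := R₁)
      have : IsSimpleRing (R₁ ⊗[ℂ] R₂) := .of_ringEquiv E.symm.toRingEquiv inferInstance
      exact RingHom.injective (R := R₁ ⊗[ℂ] R₂) φ.toRingHom
  refine ⟨?_, hinj, hsurj⟩
  have hdim := (LinearEquiv.ofBijective φ.toLinearMap ⟨hinj, hsurj⟩).symm.finrank_eq.trans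
    E.toLinearEquiv.finrank_eq
  simp only [Module.finrank_matrix, Fintype.card_fin, Fintype.card_prod, Module.finrank_self,
    mul_one] at hdim
  exact Nat.mul_self_inj.mp hdim
end
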